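/- arXiv:2001.01644 — 4 statements merged into one kernel-verified Lean document; each statement's English description precedes it below -/
import Mathlib

section
/- Let S ⊂ [0,1) be a finite set with |S| ≥ 2 and suppose that |τ − τ'|_T ≥ Δ > 0 for all distinct τ, τ' ∈ S. Then for every τ ∈ S one has Σ_{τ' ∈ S, τ' ≠ τ} 1/|τ − τ'|_T ≤ 2(1 + log|S|)/Δ. -/
/-!
Write `τ - y = r + m` with `m ∈ ℤ` and `|r| ≤ 1/2`, so that `|τ - y|_T = |r|`, and split the
points `y ≠ τ` by the sign of `r`. Two points on the same side have representatives whose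
difference lies in `[-1/2, 1/2]` and is congruent to `y' - y` modulo `1`, so that difference is
itself a torus distance, hence at least `Δ`. On each side the distances `|τ - y|_T` are thus
`Δ`-separated reals `≥ Δ`; the `k`-th smallest is at least `kΔ`, and the reciprocals sum to at
most `H_n / Δ ≤ (1 + log n) / Δ`.
-/

/-- The wrap-around (modulo 1) distance `|x|_T = min_{m ∈ ℤ} |x − m|`. -/
noncomputable def torusDist (x : ℝ) : ℝ :=
  sInf (Set.range fun m : ℤ => |x - (m : ℝ)|)

open Finset

lemma torusDist_eq_of_forall_le {x : ℝ} {k : ℤ} (h : ∀ m : ℤ, |x - k| ≤ |x - m|) :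
    torusDist x = |x - k| :=
  le_antisymm (csInf_le ⟨0, by rintro _ ⟨m, rfl⟩; positivity⟩ ⟨k, rfl⟩)
    (le_csInf ⟨_, k, rfl⟩ (by rintro _ ⟨m, rfl⟩; exact h m))

lemma torusDist_eq_abs_sub_round (x : ℝ) : torusDist x = |x - round x| :=
  torusDist_eq_of_forall_le (round_le x)

lemma torusDist_le_half (x : ℝ) : torusDist x ≤ 1 / 2 :=
  (torusDist_eq_abs_sub_round x).trans_le (abs_sub_round x)

lemma torusDist_neg (x : ℝ) : torusDist (-x) = torusDist x := by
  have key : ∀ m : ℤ, |-x - ((-round x : ℤ) : ℝ)| ≤ |-x - m| := fun m =>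
    calc |-x - ((-round x : ℤ) : ℝ)| = |x - round x| := by rw [← abs_neg]; push_cast; ring_nf
      _ ≤ |x - ((-m : ℤ) : ℝ)| := round_le x (-m)
      _ = |-x - m| := by rw [← abs_neg]; push_cast; ring_nf
  rw [torusDist_eq_of_forall_le key, torusDist_eq_abs_sub_round x, ← abs_neg]
  push_cast
  ring_nf

lemma torusDist_sub_intCast (x : ℝ) (m : ℤ) : torusDist (x - m) = torusDist x := by
  rw [torusDist_eq_abs_sub_round, torusDist_eq_abs_sub_round, round_sub_intCast]
  push_cast
  ring_nf

lemma torusDist_eq_abs_of_abs_le_half {x : ℝ} (h : |x| ≤ 1 / 2) : torusDist x = |x| := by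
  have key : ∀ m : ℤ, |x - ((0 : ℤ) : ℝ)| ≤ |x - m| := fun m => by
    rcases eq_or_ne m 0 with rfl | hm
    · rfl
    have hm1 : (1 : ℝ) ≤ |(m : ℝ)| := by exact_mod_cast Int.one_le_abs hm
    have := abs_sub_abs_le_abs_sub (m : ℝ) x
    rw [abs_sub_comm] at this
    simp only [Int.cast_zero, sub_zero]
    linarith
  simpa using torusDist_eq_of_forall_le key

noncomputable def torusRep (x : ℝ) : ℝ := x - round x

lemma abs_torusRep (x : ℝ) : |torusRep x| = torusDist x :=
  (torusDist_eq_abs_sub_round x).symm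

lemma torusDist_torusRep_sub_torusRep (x y : ℝ) :
    torusDist (torusRep x - torusRep y) = torusDist (x - y) := by
  have : torusRep x - torusRep y = (x - y) - ((round x - round y : ℤ) : ℝ) := by
    unfold torusRep; push_cast; ring
  rw [this, torusDist_sub_intCast]

lemma harmonic_mono : Monotone harmonic :=
  monotone_nat_of_le_succ fun n => by
    rw [harmonic_succ]
    exact le_add_of_nonneg_right (by positivity)

section RealLine

variable {Δ : ℝ}

lemma mul_le_orderEmbOfFin_of_separated {T : Finset ℝ} (hlb : ∀ a ∈ T, Δ ≤ a)
    (hsep : ∀ a ∈ T, ∀ b ∈ T, a < b → a + Δ ≤ b) (i : Fin #T) :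
    ((i : ℝ) + 1) * Δ ≤ T.orderEmbOfFin rfl i := by
  obtain ⟨k, hk⟩ := i
  induction k with
  | zero => simpa using hlb _ (T.orderEmbOfFin_mem rfl _)
  | succ k ih =>
    have hprev := ih (by omega)
    have hlt : T.orderEmbOfFin rfl ⟨k, by omega⟩ < T.orderEmbOfFin rfl ⟨k + 1, hk⟩ :=
      (T.orderEmbOfFin rfl).strictMono (by simp [Fin.lt_def])
    have hgap := hsep _ (T.orderEmbOfFin_mem rfl _) _ (T.orderEmbOfFin_mem rfl _) hlt
    push_cast at hprev ⊢
    linarith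

lemma sum_one_div_le_harmonic_div_of_separated {T : Finset ℝ} (hΔ : 0 < Δ)
    (hlb : ∀ a ∈ T, Δ ≤ a) (hsep : ∀ a ∈ T, ∀ b ∈ T, a < b → a + Δ ≤ b) :
    ∑ a ∈ T, 1 / a ≤ harmonic #T / Δ := by
  calc ∑ a ∈ T, 1 / a = ∑ i : Fin #T, 1 / T.orderEmbOfFin rfl i := by
        conv_lhs => rw [← T.map_orderEmbOfFin_univ rfl, sum_map]
        rfl
    _ ≤ ∑ i : Fin #T, 1 / (((i : ℝ) + 1) * Δ) :=
        sum_le_sum fun i _ =>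
          one_div_le_one_div_of_le (by positivity) (mul_le_orderEmbOfFin_of_separated hlb hsep i)
    _ = harmonic #T / Δ := by
        rw [Fin.sum_univ_eq_sum_range (fun i => 1 / (((i : ℝ) + 1) * Δ)), harmonic]
        push_cast
        rw [sum_div]
        refine sum_congr rfl fun i _ => ?_
        field_simp

lemma sum_one_div_comp_le_harmonic_div {α : Type*} {F : Finset α} {g : α → ℝ} (hΔ : 0 < Δ)
    (hlb : ∀ a ∈ F, Δ ≤ g a) (hsep : ∀ a ∈ F, ∀ b ∈ F, a ≠ b → Δ ≤ |g a - g b|) :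
    ∑ a ∈ F, 1 / g a ≤ harmonic #F / Δ := by
  classical
  have hinj : Set.InjOn g F := fun a ha b hb hab => by
    by_contra hne
    have := hsep a ha b hb hne
    rw [hab, sub_self, abs_zero] at this
    linarith
  rw [← sum_image hinj, ← card_image_of_injOn hinj]
  refine sum_one_div_le_harmonic_div_of_separated hΔ ?_ ?_
  · simp only [mem_image, forall_exists_index, and_imp, forall_apply_eq_imp_iff₂]
    exact hlb
  · simp only [mem_image, forall_exists_index, and_imp, forall_apply_eq_imp_iff₂]
    intro a ha b hb hlt
    have := hsep b hb a ha (by rintro rfl; exact hlt.false)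
    rw [abs_of_pos (sub_pos.mpr hlt)] at this
    linarith

end RealLine

lemma sum_one_div_comp_le_harmonic_div_of_torusDist {α : Type*} {F : Finset α} {g : α → ℝ}
    {Δ : ℝ} (hΔ : 0 < Δ) (hlb : ∀ a ∈ F, Δ ≤ g a) (hub : ∀ a ∈ F, g a ≤ 1 / 2)
    (hsep : ∀ a ∈ F, ∀ b ∈ F, a ≠ b → Δ ≤ torusDist (g a - g b)) :
    ∑ a ∈ F, 1 / g a ≤ harmonic #F / Δ :=
  sum_one_div_comp_le_harmonic_div hΔ hlb fun a ha b hb hab => by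
    have hdiff : |g a - g b| ≤ 1 / 2 := abs_sub_le_iff.mpr
      ⟨by linarith [hlb b hb, hub a ha], by linarith [hlb a ha, hub b hb]⟩
    rw [← torusDist_eq_abs_of_abs_le_half hdiff]
    exact hsep a ha b hb hab

lemma sum_one_div_torusDist_side_le {S : Finset ℝ} {Δ : ℝ} (hΔ : 0 < Δ)
    (hsep : ∀ τ ∈ S, ∀ τ' ∈ S, τ ≠ τ' → Δ ≤ torusDist (τ - τ')) {τ : ℝ} (hτ : τ ∈ S)
    {σ : ℝ} (hσ : σ = 1 ∨ σ = -1) :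
    ∑ y ∈ (S.erase τ).filter (fun y => 0 < σ * torusRep (τ - y)), 1 / torusDist (τ - y)
      ≤ harmonic #S / Δ := by
  set F := (S.erase τ).filter fun y => 0 < σ * torusRep (τ - y)
  have hFS : F ⊆ S := (filter_subset _ _).trans (erase_subset _ _)
  have hside : ∀ y ∈ F, torusDist (τ - y) = σ * torusRep (τ - y) := fun y hy => by
    have hpos := (mem_filter.mp hy).2
    rw [← abs_torusRep, ← abs_of_pos hpos, abs_mul]
    rcases hσ with rfl | rfl <;> simp
  have hsign : ∀ z, torusDist (σ * z) = torusDist z := fun z => by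
    rcases hσ with rfl | rfl <;> simp [torusDist_neg]
  rw [sum_congr rfl fun y hy => by rw [hside y hy]]
  calc _ ≤ harmonic #F / Δ := by
        refine sum_one_div_comp_le_harmonic_div_of_torusDist hΔ (fun y hy => ?_)
          (fun y hy => ?_) (fun a ha b hb hab => ?_)
        · obtain ⟨hyτ, hyS⟩ := mem_erase.mp (mem_filter.mp hy).1
          rw [← hside y hy]
          exact hsep τ hτ y hyS hyτ.symm
        · rw [← hside y hy]
          exact torusDist_le_half _
        · rw [← mul_sub, hsign, torusDist_torusRep_sub_torusRep, sub_sub_sub_cancel_left]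
          exact hsep b (hFS hb) a (hFS ha) (Ne.symm hab)
    _ ≤ harmonic #S / Δ := by
        gcongr
        exact_mod_cast harmonic_mono (card_le_card hFS)

theorem separated_inverse_distance_sum_general (S : Finset ℝ) (Δ : ℝ) (hΔ : 0 < Δ)
    (hsep : ∀ τ ∈ S, ∀ τ' ∈ S, τ ≠ τ' → Δ ≤ torusDist (τ - τ'))
    (τ : ℝ) (hτ : τ ∈ S) :
    ∑ τ' ∈ S.erase τ, 1 / torusDist (τ - τ') ≤ 2 * (1 + Real.log S.card) / Δ := by
  have hsplit : ∀ y ∈ S.erase τ, ¬ 0 < 1 * torusRep (τ - y) ↔ 0 < -1 * torusRep (τ - y) :=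
    fun y hy => by
      obtain ⟨hyτ, hyS⟩ := mem_erase.mp hy
      have hne : torusRep (τ - y) ≠ 0 := fun h0 => by
        have := hsep τ hτ y hyS hyτ.symm
        rw [← abs_torusRep, h0, abs_zero] at this
        linarith
      rw [one_mul, neg_one_mul, not_lt, neg_pos]
      exact ⟨hne.lt_of_le, le_of_lt⟩
  have hlog : (harmonic #S : ℝ) / Δ ≤ (1 + Real.log #S) / Δ := by
    gcongr
    exact harmonic_le_one_add_log _
  rw [← sum_filter_add_sum_filter_not _ (fun y => 0 < 1 * torusRep (τ - y)),
    filter_congr hsplit, mul_div_assoc, two_mul]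
  exact add_le_add
    ((sum_one_div_torusDist_side_le hΔ hsep hτ (.inl rfl)).trans hlog)
    ((sum_one_div_torusDist_side_le hΔ hsep hτ (.inr rfl)).trans hlog)

/-- If `S ⊂ [0,1)` has at least two points and all distinct points of `S` are at
wrap-around distance at least `Δ > 0`, then for every `τ ∈ S`,
`∑_{τ' ∈ S, τ' ≠ τ} 1/|τ − τ'|_T ≤ 2(1 + log|S|)/Δ`. -/
theorem separated_inverse_distance_sum (S : Finset ℝ) (hS : ↑S ⊆ Set.Ico (0 : ℝ) 1)
    (hcard : 2 ≤ S.card) (Δ : ℝ) (hΔ : 0 < Δ)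
    (hsep : ∀ τ ∈ S, ∀ τ' ∈ S, τ ≠ τ' → Δ ≤ torusDist (τ - τ'))
    (τ : ℝ) (hτ : τ ∈ S) :
    ∑ τ' ∈ S.erase τ, 1 / torusDist (τ - τ') ≤ 2 * (1 + Real.log S.card) / Δ :=
  separated_inverse_distance_sum_general S Δ hΔ hsep τ hτ
end

section
/- Let n ≥ 1 and let S ⊂ [0,1) be a finite set with |S| ≥ 2 such that |τ − τ'|_T ≥ Δ > 0 for all distinct τ, τ' ∈ S. For τ ∈ [0,1) let ψ(τ) ∈ ℂ^{2n+1} be the vector with entries e^{2πikτ}, k = −n,…,n, and let U be the (2n+1)×|S| matrix whose columns are ψ(τ), τ ∈ S. Then the maximum absolute row sum of the matrix I − (1/(2n+1))·U*U is at most (1 + log|S|)/((2n+1)·Δ); equivalently, max_{τ∈S} Σ_{τ'∈S, τ'≠τ} (1/(2n+1))·|Σ_{k=−n}^{n} e^{2πik(τ−τ')}| ≤ (1 + log|S|)/((2n+1)·Δ). -/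
/-- For `τ ∈ [0,1)`, `ψ(τ) ∈ ℂ^{2n+1}` is the vector with entries `e^{2πikτ}`,
`k = −n,…,n`. -/
noncomputable def psi (n : ℕ) (τ : ℝ) : Fin (2 * n + 1) → ℂ :=
  fun j => Complex.exp (2 * (Real.pi : ℂ) * Complex.I *
    ((((j : ℕ) : ℤ) - (n : ℤ) : ℤ) : ℂ) * (τ : ℂ))

/-- `U` is the `(2n+1) × |S|` matrix whose columns are the vectors `ψ(τ)`, `τ ∈ S`. -/
noncomputable def Umat (n : ℕ) (S : Finset ℝ) :
    Matrix (Fin (2 * n + 1)) {x // x ∈ S} ℂ :=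
  Matrix.of fun j τ => psi n (τ : ℝ) j

-- Auxiliary lemmas
section Aux
lemma torusDist_le' (x : ℝ) (m : ℤ) :
    sInf (Set.range fun m : ℤ => |x - (m : ℝ)|) ≤ |x - m| := by
  apply csInf_le
  · exact ⟨0, by rintro y ⟨k, rfl⟩; positivity⟩
  · exact ⟨m, rfl⟩

-- |e^{2πiθ} - 1| = 2|sin(πθ)|
lemma abs_exp_sub_one (θ : ℝ) :
    ‖Complex.exp (2 * (Real.pi : ℂ) * Complex.I * (θ : ℂ)) - 1‖ =
      2 * |Real.sin (Real.pi * θ)| := by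
  have h : (2 * (Real.pi : ℂ) * Complex.I * (θ : ℂ)) = ((2 * Real.pi * θ : ℝ) : ℂ) * Complex.I := by
    push_cast; ring
  rw [h, Complex.exp_mul_I]
  have : Complex.cos ((2 * Real.pi * θ : ℝ) : ℂ) + Complex.sin ((2 * Real.pi * θ : ℝ):ℂ) * Complex.I - 1
      = Complex.ofReal (Real.cos (2 * Real.pi * θ) - 1) + Complex.ofReal (Real.sin (2*Real.pi*θ)) * Complex.I := by
    push_cast [Complex.ofReal_cos, Complex.ofReal_sin]; ring
  rw [this]
  rw [← Real.sqrt_sq (by positivity : (0:ℝ) ≤ 2 * |Real.sin (Real.pi * θ)|)]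
  rw [Complex.norm_def, Complex.normSq_add_mul_I]
  congr 1
  have hc : Real.cos (2 * Real.pi * θ) = 1 - 2 * Real.sin (Real.pi * θ) ^ 2 := by

    have h2 : Real.cos (2 * Real.pi * θ) = 2 * Real.cos (Real.pi * θ)^2 - 1 := by
      have := Real.cos_two_mul (Real.pi * θ); rw [← this]; ring_nf
    rw [h2]
    have := Real.sin_sq_add_cos_sq (Real.pi * θ)
    nlinarith [this]
  have hs : Real.sin (2 * Real.pi * θ) = 2 * Real.sin (Real.pi * θ) * Real.cos (Real.pi * θ) := by
    have := Real.sin_two_mul (Real.pi * θ); rw [← this]; ring_nf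
  rw [hc, hs]
  have := Real.sin_sq_add_cos_sq (Real.pi * θ)
  have habs : |Real.sin (Real.pi * θ)|^2 = Real.sin (Real.pi * θ)^2 := sq_abs _
  nlinarith [this, habs]


-- |sin(π θ)| ≥ 2|r| when θ = r + k, |r| ≤ 1/2
lemma abs_sin_ge (θ r : ℝ) (k : ℤ) (hθ : θ = r + k) (hr : |r| ≤ 1/2) :
    2 * |r| ≤ |Real.sin (Real.pi * θ)| := by
  have h1 : Real.sin (Real.pi * θ) = Real.sin (Real.pi * r) * Real.cos (k * Real.pi) := by
    rw [hθ, mul_add, Real.sin_add, mul_comm Real.pi (k:ℝ), Real.sin_int_mul_pi]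
    ring
  rw [h1, abs_mul, Real.abs_cos_int_mul_pi, mul_one]
  have h2 : |Real.sin (Real.pi * r)| = Real.sin (Real.pi * |r|) := by
    rcases abs_cases r with ⟨h, _⟩ | ⟨h, hneg⟩
    · rw [h, abs_of_nonneg]
      apply Real.sin_nonneg_of_nonneg_of_le_pi
      · positivity
      · nlinarith [Real.pi_pos, abs_nonneg r, hr, h]
    · rw [h, mul_neg, Real.sin_neg, abs_of_nonpos]
      apply Real.sin_nonpos_of_nonpos_of_neg_pi_le
      · nlinarith [Real.pi_pos, hr, h]
      · nlinarith [Real.pi_pos, hneg]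
  rw [h2]
  have := Real.mul_le_sin (x := Real.pi * |r|) (by positivity)
    (by nlinarith [Real.pi_pos, hr])
  calc 2 * |r| = 2 / Real.pi * (Real.pi * |r|) := by
        field_simp
    _ ≤ Real.sin (Real.pi * |r|) := this

lemma dirichlet_abs_le (n : ℕ) (θ r : ℝ) (k : ℤ) (hθ : θ = r + k) (hr : |r| ≤ 1/2)
    (hr0 : 0 < |r|) :
    ‖∑ j : Fin (2 * n + 1), Complex.exp (2 * (Real.pi : ℂ) * Complex.I *
      ((((j : ℕ) : ℤ) - (n : ℤ) : ℤ) : ℂ) * (θ : ℂ))‖ ≤ 1 / (2 * |r|) := by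
  set z : ℂ := Complex.exp (2 * (Real.pi : ℂ) * Complex.I * (θ : ℂ)) with hz
  have hterm : ∀ j : Fin (2 * n + 1), Complex.exp (2 * (Real.pi : ℂ) * Complex.I *
      ((((j : ℕ) : ℤ) - (n : ℤ) : ℤ) : ℂ) * (θ : ℂ)) = z ^ ((j : ℕ) - (n : ℤ) : ℤ) := by
    intro j
    rw [hz, ← Complex.exp_int_mul]
    congr 1
    push_cast
    ring
  have habsz : ‖z‖ = 1 := by
    rw [hz]
    have : (2 * (Real.pi : ℂ) * Complex.I * (θ : ℂ)) = ((2 * Real.pi * θ : ℝ) : ℂ) * Complex.I := by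
      push_cast; ring
    rw [this, Complex.norm_exp_ofReal_mul_I]
  have hzne : z ≠ 0 := by
    intro h; rw [h] at habsz; simp at habsz
  have hz1 : z ≠ 1 := by
    intro h
    rw [hz, Complex.exp_eq_one_iff] at h
    obtain ⟨m, hm⟩ := h
    have hπ : (Real.pi : ℂ) ≠ 0 := by
      simpa using Real.pi_ne_zero
    have hne2 : (2 * (Real.pi : ℂ) * Complex.I) ≠ 0 :=
      mul_ne_zero (mul_ne_zero two_ne_zero (Complex.ofReal_ne_zero.2 Real.pi_ne_zero))
        Complex.I_ne_zero
    have hθm : (θ : ℂ) = (m : ℂ) := by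
      apply mul_right_cancel₀ hne2
      linear_combination hm
    have hθm' : θ = (m : ℝ) := by exact_mod_cast hθm
    have : r = ((m - k : ℤ) : ℝ) := by rw [hθ] at hθm'; push_cast; linarith
    have hne : (m - k : ℤ) ≠ 0 := by
      intro h0
      rw [h0, Int.cast_zero] at this
      rw [this, abs_zero] at hr0
      exact lt_irrefl 0 hr0
    have : (1 : ℝ) ≤ |r| := by
      rw [this, ← Int.cast_abs]
      exact_mod_cast Int.one_le_abs hne
    linarith
  -- rewrite the sum
  have hsum : (∑ j : Fin (2 * n + 1), Complex.exp (2 * (Real.pi : ℂ) * Complex.I *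
      ((((j : ℕ) : ℤ) - (n : ℤ) : ℤ) : ℂ) * (θ : ℂ)))
      = z ^ (-(n : ℤ)) * ∑ i ∈ Finset.range (2 * n + 1), z ^ i := by
    rw [Finset.mul_sum]
    calc (∑ j : Fin (2 * n + 1), Complex.exp (2 * (Real.pi : ℂ) * Complex.I *
          ((((j : ℕ) : ℤ) - (n : ℤ) : ℤ) : ℂ) * (θ : ℂ)))
        = ∑ j : Fin (2 * n + 1), z ^ (((j : ℕ) : ℤ) - (n : ℤ)) :=
          Finset.sum_congr rfl (fun j _ => hterm j)
      _ = ∑ i ∈ Finset.range (2 * n + 1), z ^ ((i : ℤ) - (n : ℤ)) :=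
          Fin.sum_univ_eq_sum_range (fun i => z ^ ((i : ℤ) - (n : ℤ))) _
      _ = ∑ i ∈ Finset.range (2 * n + 1), z ^ (-(n : ℤ)) * z ^ i := by
          apply Finset.sum_congr rfl
          intro i _
          rw [← zpow_natCast z i, ← zpow_add₀ hzne]
          congr 1
          ring
  rw [hsum, norm_mul, norm_zpow, habsz, one_zpow, one_mul, geom_sum_eq hz1, norm_div]
  have hnum : ‖z ^ (2 * n + 1) - 1‖ ≤ 2 := by
    calc ‖z ^ (2 * n + 1) - 1‖
        ≤ ‖z ^ (2 * n + 1)‖ + ‖(1:ℂ)‖ := by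
          simpa [sub_eq_add_neg] using norm_add_le (z ^ (2 * n + 1)) (-1)
      _ ≤ 2 := by rw [norm_pow, habsz, one_pow, norm_one]; norm_num
  have hden : 4 * |r| ≤ ‖z - 1‖ := by
    rw [hz, abs_exp_sub_one θ]
    have := abs_sin_ge θ r k hθ hr
    linarith
  have h2 : ‖z ^ (2 * n + 1) - 1‖ / ‖z - 1‖ ≤ 2 / (4 * |r|) :=
    div_le_div₀ (by norm_num) hnum (by positivity) hden
  calc ‖z ^ (2 * n + 1) - 1‖ / ‖z - 1‖ ≤ 2 / (4 * |r|) := h2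
    _ = 1 / (2 * |r|) := by
        rw [show (4:ℝ) * |r| = 2 * (2 * |r|) by ring, ← div_div]
        norm_num

lemma sep_sum_inv (Δ : ℝ) (hΔ : 0 < Δ) : ∀ (k : ℕ) (c : ℕ) (T : Finset ℝ), T.card = k →
    (∀ x ∈ T, ((c : ℝ) + 1) * Δ ≤ x) → (∀ x ∈ T, ∀ y ∈ T, x ≠ y → Δ ≤ |x - y|) →
    ∑ x ∈ T, 1 / x ≤ ∑ j ∈ Finset.range k, 1 / (((c : ℝ) + 1 + j) * Δ) := by
  intro k
  induction k with
  | zero => intro c T hT _ _; rw [Finset.card_eq_zero] at hT; simp [hT]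
  | succ k ih =>
    intro c T hT hlo hsep
    have hne : T.Nonempty := Finset.card_pos.mp (by omega)
    set m := T.min' hne with hm
    have hmT : m ∈ T := T.min'_mem hne
    have hmlo : ((c : ℝ) + 1) * Δ ≤ m := hlo m hmT
    have hm0 : 0 < m := lt_of_lt_of_le (by positivity) hmlo
    have hT' : (T.erase m).card = k := by rw [Finset.card_erase_of_mem hmT, hT]; omega
    have h1 : ∑ x ∈ T, 1 / x = 1 / m + ∑ x ∈ T.erase m, 1 / x :=
      (Finset.add_sum_erase T _ hmT).symm
    have hlo' : ∀ x ∈ T.erase m, (((c + 1 : ℕ) : ℝ) + 1) * Δ ≤ x := by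
      intro x hx
      have hxT : x ∈ T := Finset.mem_of_mem_erase hx
      have hxm : x ≠ m := Finset.ne_of_mem_erase hx
      have hge : m ≤ x := T.min'_le x hxT
      have hd : Δ ≤ |x - m| := hsep x hxT m hmT hxm
      rw [abs_of_nonneg (by linarith)] at hd
      push_cast
      linarith
    have hsep' : ∀ x ∈ T.erase m, ∀ y ∈ T.erase m, x ≠ y → Δ ≤ |x - y| := by
      intro x hx y hy hxy
      exact hsep x (Finset.mem_of_mem_erase hx) y (Finset.mem_of_mem_erase hy) hxy
    have h2 := ih (c + 1) (T.erase m) hT' hlo' hsep'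
    rw [h1, Finset.sum_range_succ']
    have h3 : (1 : ℝ) / m ≤ 1 / (((c : ℝ) + 1 + 0) * Δ) := by
      rw [add_zero]
      apply one_div_le_one_div_of_le (by positivity) hmlo
    have h4 : ∑ x ∈ T.erase m, 1 / x ≤
        ∑ j ∈ Finset.range k, 1 / (((c : ℝ) + 1 + (j + 1)) * Δ) := by
      refine h2.trans (le_of_eq ?_)
      apply Finset.sum_congr rfl
      intro j _
      push_cast
      ring_nf
    push_cast at h4 ⊢
    linarith

lemma sep_sum_inv_bound (Δ : ℝ) (hΔ : 0 < Δ) (N : ℕ) (hN : 2 ≤ N) (T : Finset ℝ)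
    (hcard : T.card ≤ N) (hlo : ∀ x ∈ T, Δ ≤ x)
    (hsep : ∀ x ∈ T, ∀ y ∈ T, x ≠ y → Δ ≤ |x - y|) :
    ∑ x ∈ T, 1 / x ≤ (1 + Real.log N) / Δ := by
  have h1 := sep_sum_inv Δ hΔ T.card 0 T rfl (by simpa using hlo) hsep
  have h2 : ∑ j ∈ Finset.range T.card, 1 / (((0:ℕ) : ℝ) + 1 + j) * Δ⁻¹
      = (harmonic T.card : ℝ) * Δ⁻¹ := by
    rw [harmonic]
    push_cast
    rw [Finset.sum_mul]
    apply Finset.sum_congr rfl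
    intro j _
    rw [one_div]
    congr 2
    ring
  have h3 : (harmonic T.card : ℝ) ≤ 1 + Real.log N := by
    rcases Nat.eq_zero_or_pos T.card with h | h
    · rw [h]
      simp only [harmonic_zero, Rat.cast_zero]
      have : (0:ℝ) ≤ Real.log N := Real.log_nonneg (by exact_mod_cast Nat.one_le_of_lt hN)
      linarith
    · refine (harmonic_le_one_add_log T.card).trans ?_
      have : Real.log T.card ≤ Real.log N :=
        Real.log_le_log (by exact_mod_cast h) (by exact_mod_cast hcard)
      linarith
  have h1' : ∑ x ∈ T, 1 / x ≤ (harmonic T.card : ℝ) * Δ⁻¹ := by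
    rw [← h2]
    refine h1.trans (le_of_eq ?_)
    apply Finset.sum_congr rfl
    intro j _
    rw [div_eq_mul_inv, mul_inv, one_div, one_mul]
  calc ∑ x ∈ T, 1 / x ≤ (harmonic T.card : ℝ) * Δ⁻¹ := h1'
    _ ≤ (1 + Real.log N) * Δ⁻¹ := by
        apply mul_le_mul_of_nonneg_right h3 (by positivity)
    _ = (1 + Real.log N) / Δ := by rw [div_eq_mul_inv]

end Aux

/-- If the points of `S ⊂ [0,1)` are `Δ`-separated in wrap-around distance, then every
absolute row sum of `I − (1/(2n+1))·U*U` is at most `(1 + log|S|)/((2n+1)Δ)`. -/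
theorem gram_deviation_row_sum_bound (n : ℕ) (hn : 1 ≤ n) (S : Finset ℝ)
    (hS : ↑S ⊆ Set.Ico (0 : ℝ) 1) (hcard : 2 ≤ S.card) (Δ : ℝ) (hΔ : 0 < Δ)
    (hsep : ∀ τ ∈ S, ∀ τ' ∈ S, τ ≠ τ' → Δ ≤ torusDist (τ - τ'))
    (τ0 : {x // x ∈ S}) :
    ∑ τ' : {x // x ∈ S},
      ‖((1 : Matrix {x // x ∈ S} {x // x ∈ S} ℂ) -
            (1 / (2 * (n : ℂ) + 1)) • ((Umat n S).conjTranspose * Umat n S)) τ0 τ'‖ ≤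
      (1 + Real.log S.card) / ((2 * (n : ℝ) + 1) * Δ) := by
  classical
  have hπ := Real.pi_pos
  set t0 : ℝ := (τ0 : ℝ) with ht0def
  have ht0S : t0 ∈ S := τ0.2
  set r : ℝ → ℝ := fun y => (y - t0) - round (y - t0) with hrdef
  have hbdd : BddBelow (Set.range fun m : ℤ => |((0:ℝ)) - (m : ℝ)|) := ⟨0, by
    rintro _ ⟨k, rfl⟩; positivity⟩
  have htorus_le : ∀ (x : ℝ) (m : ℤ), torusDist x ≤ |x - (m : ℝ)| := by
    intro x m
    rw [torusDist]
    exact csInf_le ⟨0, by rintro _ ⟨k, rfl⟩; positivity⟩ ⟨m, rfl⟩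
  have hrabs : ∀ y, |r y| ≤ 1/2 := fun y => abs_sub_round (y - t0)
  have hrlow : ∀ y ∈ S, y ≠ t0 → Δ ≤ |r y| := by
    intro y hy hne
    refine (hsep y hy t0 ht0S hne).trans ?_
    have := htorus_le (y - t0) (round (y - t0))
    simpa [hrdef] using this
  have hrsep : ∀ a ∈ S, ∀ b ∈ S, a ≠ b → Δ ≤ |r a - r b| := by
    intro a ha b hb hab
    refine (hsep a ha b hb hab).trans ?_
    have h1 : r a - r b = (a - b) - ((round (a - t0) - round (b - t0) : ℤ) : ℝ) := by
      simp only [hrdef]; push_cast; ring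
    rw [h1]
    exact htorus_le (a - b) _
  have hrinj : ∀ a ∈ S, ∀ b ∈ S, r a = r b → a = b := by
    intro a ha b hb h
    by_contra hab
    have := hrsep a ha b hb hab
    rw [h, sub_self, abs_zero] at this; linarith
  -- the Dirichlet kernel
  set D : ℝ → ℂ := fun θ => ∑ j : Fin (2 * n + 1), Complex.exp (2 * (Real.pi : ℂ) *
    Complex.I * ((((j : ℕ) : ℤ) - (n : ℤ) : ℤ) : ℂ) * (θ : ℂ)) with hDdef
  have hentry : ∀ τ' : {x // x ∈ S},
      (((1 : Matrix {x // x ∈ S} {x // x ∈ S} ℂ) -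
        (1 / (2 * (n : ℂ) + 1)) • ((Umat n S).conjTranspose * Umat n S)) τ0 τ')
      = (if τ0 = τ' then 1 else 0) - (1 / (2 * (n : ℂ) + 1)) * D ((τ' : ℝ) - t0) := by
    intro τ'
    have hDval : (((Umat n S).conjTranspose * Umat n S) τ0 τ') = D ((τ' : ℝ) - t0) := by
      rw [Matrix.mul_apply]
      apply Finset.sum_congr rfl
      intro j _
      rw [Matrix.conjTranspose_apply]
      show (starRingEnd ℂ) (psi n t0 j) * psi n (τ' : ℝ) j = _
      unfold psi
      rw [← Complex.exp_conj, ← Complex.exp_add]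
      congr 1
      simp only [map_mul, Complex.conj_I, Complex.conj_ofReal, map_intCast,
        map_ofNat]
      push_cast
      ring
    simp only [Matrix.sub_apply, Matrix.smul_apply, Matrix.one_apply, hDval, smul_eq_mul]
  have h2n1 : (2 * (n : ℂ) + 1) ≠ 0 := by
    have : (2 * (n : ℂ) + 1) = ((2 * n + 1 : ℕ) : ℂ) := by push_cast; ring
    rw [this]
    exact Nat.cast_ne_zero.mpr (by omega)
  have hD0 : D 0 = (2 * (n : ℂ) + 1) := by
    simp only [hDdef, Complex.ofReal_zero, mul_zero, Complex.exp_zero]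
    rw [Finset.sum_const, Finset.card_univ, Fintype.card_fin]
    push_cast; ring
  have hdiag : ‖((1 : Matrix {x // x ∈ S} {x // x ∈ S} ℂ) -
        (1 / (2 * (n : ℂ) + 1)) • ((Umat n S).conjTranspose * Umat n S)) τ0 τ0‖ = 0 := by
    rw [hentry τ0, if_pos rfl]
    have : ((τ0 : ℝ) - t0) = 0 := by rw [ht0def]; ring
    rw [this, hD0]
    rw [one_div, inv_mul_cancel₀ h2n1, sub_self, norm_zero]
  -- split off the diagonal term
  rw [← Finset.add_sum_erase Finset.univ _ (Finset.mem_univ τ0), hdiag, zero_add]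
  -- bound each off-diagonal term
  have hne_t0 : ∀ τ' : {x // x ∈ S}, τ' ≠ τ0 → (τ' : ℝ) ≠ t0 := by
    intro τ' h hc
    exact h (Subtype.ext (by rw [hc]))
  have habs21 : ‖1 / (2 * (n : ℂ) + 1)‖ = 1 / (2 * (n : ℝ) + 1) := by
    have h1 : (2 * (n : ℂ) + 1) = ((2 * (n : ℝ) + 1 : ℝ) : ℂ) := by push_cast; ring
    rw [norm_div, norm_one, h1, Complex.norm_real, Real.norm_eq_abs, abs_of_pos (by positivity)]
  have hbound : ∀ τ' ∈ Finset.univ.erase τ0,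
      ‖((1 : Matrix {x // x ∈ S} {x // x ∈ S} ℂ) -
          (1 / (2 * (n : ℂ) + 1)) • ((Umat n S).conjTranspose * Umat n S)) τ0 τ'‖
      ≤ (1 / (2 * (n : ℝ) + 1)) * (1 / 2) * (1 / |r (τ' : ℝ)|) := by
    intro τ' hτ'
    have hne : τ' ≠ τ0 := Finset.ne_of_mem_erase hτ'
    have hvne : (τ' : ℝ) ≠ t0 := hne_t0 τ' hne
    rw [hentry τ', if_neg (fun h => hne (h.symm)), zero_sub, norm_neg, norm_mul, habs21]
    have hd := dirichlet_abs_le n ((τ' : ℝ) - t0) (r (τ' : ℝ)) (round ((τ' : ℝ) - t0))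
      (by simp only [hrdef]; ring) (hrabs _)
      (lt_of_lt_of_le hΔ (hrlow _ τ'.2 hvne))
    have hDle : ‖D ((τ' : ℝ) - t0)‖ ≤ 1 / (2 * |r (τ' : ℝ)|) := hd
    calc (1 / (2 * (n : ℝ) + 1)) * ‖D ((τ' : ℝ) - t0)‖
        ≤ (1 / (2 * (n : ℝ) + 1)) * (1 / (2 * |r (τ' : ℝ)|)) := by
          apply mul_le_mul_of_nonneg_left hDle (by positivity)
      _ = (1 / (2 * (n : ℝ) + 1)) * (1 / 2) * (1 / |r (τ' : ℝ)|) := by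
          rw [mul_assoc, ← one_div_mul_one_div]
  have hsum1 : ∑ τ' ∈ Finset.univ.erase τ0,
      ‖((1 : Matrix {x // x ∈ S} {x // x ∈ S} ℂ) -
          (1 / (2 * (n : ℂ) + 1)) • ((Umat n S).conjTranspose * Umat n S)) τ0 τ'‖
      ≤ (1 / (2 * (n : ℝ) + 1)) * (1 / 2) *
        ∑ τ' ∈ Finset.univ.erase τ0, 1 / |r (τ' : ℝ)| := by
    rw [Finset.mul_sum]
    exact Finset.sum_le_sum hbound
  -- transfer to a finset of real numbers
  set R : Finset ℝ := (Finset.univ.erase τ0).image (fun τ' : {x // x ∈ S} => r (τ' : ℝ))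
    with hRdef
  have hinj : ∀ a ∈ Finset.univ.erase τ0, ∀ b ∈ Finset.univ.erase τ0,
      r (a : ℝ) = r (b : ℝ) → a = b := by
    intro a _ b _ h
    exact Subtype.ext (hrinj _ a.2 _ b.2 h)
  have hsum2 : ∑ τ' ∈ Finset.univ.erase τ0, 1 / |r (τ' : ℝ)| = ∑ x ∈ R, 1 / |x| :=
    (Finset.sum_image (f := fun x : ℝ => 1 / |x|) hinj).symm
  -- properties of R
  have hRlow : ∀ x ∈ R, Δ ≤ |x| := by
    intro x hx
    rw [hRdef, Finset.mem_image] at hx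
    obtain ⟨τ', hτ', rfl⟩ := hx
    exact hrlow _ τ'.2 (hne_t0 τ' (Finset.ne_of_mem_erase hτ'))
  have hRsep : ∀ x ∈ R, ∀ y ∈ R, x ≠ y → Δ ≤ |x - y| := by
    intro x hx y hy hxy
    rw [hRdef, Finset.mem_image] at hx hy
    obtain ⟨a, _, rfl⟩ := hx
    obtain ⟨b, _, rfl⟩ := hy
    exact hrsep _ a.2 _ b.2 (fun h => hxy (by rw [h]))
  have hRcard : R.card ≤ S.card := by
    calc R.card ≤ (Finset.univ.erase τ0).card := Finset.card_image_le
      _ ≤ (Finset.univ : Finset {x // x ∈ S}).card := Finset.card_le_card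
          (Finset.erase_subset _ _)
      _ = S.card := by rw [Finset.card_univ, Fintype.card_coe]
  -- split R into positive and negative parts
  set P : Finset ℝ := R.filter (fun x => 0 < x) with hPdef
  set Q : Finset ℝ := R.filter (fun x => ¬ 0 < x) with hQdef
  set Qn : Finset ℝ := Q.image (fun x => -x) with hQndef
  have hQneg : ∀ x ∈ Q, x < 0 := by
    intro x hx
    rw [hQdef, Finset.mem_filter] at hx
    have hlo := hRlow x hx.1
    rcases lt_trichotomy x 0 with h | h | h
    · exact h
    · exfalso; rw [h, abs_zero] at hlo; linarith
    · exact absurd h hx.2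
  have hsplitP : ∑ x ∈ P, 1 / |x| = ∑ x ∈ P, 1 / x := by
    apply Finset.sum_congr rfl
    intro x hx
    rw [hPdef, Finset.mem_filter] at hx
    rw [abs_of_pos hx.2]
  have hsplitQ : ∑ x ∈ Q, 1 / |x| = ∑ y ∈ Qn, 1 / y := by
    rw [hQndef, Finset.sum_image (by intro a _ b _ h; linarith)]
    apply Finset.sum_congr rfl
    intro x hx
    rw [abs_of_neg (hQneg x hx)]
  have hPbound : ∑ x ∈ P, 1 / x ≤ (1 + Real.log S.card) / Δ := by
    apply sep_sum_inv_bound Δ hΔ S.card hcard P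
    · exact le_trans (Finset.card_filter_le _ _) hRcard
    · intro x hx
      rw [hPdef, Finset.mem_filter] at hx
      have := hRlow x hx.1
      rw [abs_of_pos hx.2] at this
      exact this
    · intro x hx y hy hxy
      rw [hPdef, Finset.mem_filter] at hx hy
      exact hRsep x hx.1 y hy.1 hxy
  have hQbound : ∑ y ∈ Qn, 1 / y ≤ (1 + Real.log S.card) / Δ := by
    apply sep_sum_inv_bound Δ hΔ S.card hcard Qn
    · exact le_trans Finset.card_image_le (le_trans (Finset.card_filter_le _ _) hRcard)
    · intro y hy
      rw [hQndef, Finset.mem_image] at hy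
      obtain ⟨x, hx, rfl⟩ := hy
      have h1 := hRlow x (Finset.mem_filter.mp hx).1
      rw [abs_of_neg (hQneg x hx)] at h1
      exact h1
    · intro y1 hy1 y2 hy2 hne
      rw [hQndef, Finset.mem_image] at hy1 hy2
      obtain ⟨x1, hx1, rfl⟩ := hy1
      obtain ⟨x2, hx2, rfl⟩ := hy2
      have := hRsep x1 (Finset.mem_filter.mp hx1).1 x2 (Finset.mem_filter.mp hx2).1
        (fun h => hne (by rw [h]))
      rw [show -x1 - -x2 = -(x1 - x2) by ring, abs_neg]
      exact this
  have hRtotal : ∑ x ∈ R, 1 / |x| ≤ 2 * (1 + Real.log S.card) / Δ := by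
    rw [← Finset.sum_filter_add_sum_filter_not R (fun x => 0 < x) (fun x => 1 / |x|)]
    rw [← hPdef, ← hQdef] at *
    rw [hsplitP, hsplitQ]
    calc ∑ x ∈ P, 1 / x + ∑ y ∈ Qn, 1 / y
        ≤ (1 + Real.log S.card) / Δ + (1 + Real.log S.card) / Δ := add_le_add hPbound hQbound
      _ = 2 * (1 + Real.log S.card) / Δ := by ring
  -- put it together
  have hlogpos : 0 ≤ 1 + Real.log S.card := by
    have : (0:ℝ) ≤ Real.log S.card := Real.log_nonneg (by exact_mod_cast Nat.one_le_of_lt hcard)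
    linarith
  calc ∑ τ' ∈ Finset.univ.erase τ0,
      ‖((1 : Matrix {x // x ∈ S} {x // x ∈ S} ℂ) -
          (1 / (2 * (n : ℂ) + 1)) • ((Umat n S).conjTranspose * Umat n S)) τ0 τ'‖
      ≤ (1 / (2 * (n : ℝ) + 1)) * (1 / 2) *
        ∑ τ' ∈ Finset.univ.erase τ0, 1 / |r (τ' : ℝ)| := hsum1
    _ = (1 / (2 * (n : ℝ) + 1)) * (1 / 2) * ∑ x ∈ R, 1 / |x| := by rw [hsum2]
    _ ≤ (1 / (2 * (n : ℝ) + 1)) * (1 / 2) * (2 * (1 + Real.log S.card) / Δ) := by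
        apply mul_le_mul_of_nonneg_left hRtotal (by positivity)
    _ = (1 + Real.log S.card) / ((2 * (n : ℝ) + 1) * Δ) := by
        field_simp
end

section
/- For every n ∈ ℕ, every s with 1/(2n+3) ≤ s ≤ 1/2, and every θ with 0 ≤ θ ≤ 1/2, one has |cos((2n+3)πs)·sin(π(s−θ)) − sin(πs)·cos((2n+3)π(s−θ))| ≤ (6n+9)·π²·s·θ. -/
open Real

/- Writing the expression as `sin(πs)·(cos((2n+3)πs) − cos((2n+3)π(s−θ)))
+ cos((2n+3)πs)·(sin(π(s−θ)) − sin(πs))`, the 1-Lipschitz property of `sin` and `cos` together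
with `|sin x| ≤ |x|` bounds it by `(2n+3)π²sθ + πθ`; the condition `(2n+3)s ≥ 1` lets the
second term be absorbed into the first. -/

theorem abs_cos_mul_sin_sub_sin_mul_cos_le (a b u v : ℝ) :
    |cos (a * u) * sin (b * v) - sin (b * u) * cos (a * v)| ≤
      |b * u| * |a * u - a * v| + |b * v - b * u| := by
  have hsplit : cos (a * u) * sin (b * v) - sin (b * u) * cos (a * v) =
      sin (b * u) * (cos (a * u) - cos (a * v)) + cos (a * u) * (sin (b * v) - sin (b * u)) := by
    ring
  rw [hsplit]
  calc _ ≤ |sin (b * u)| * |cos (a * u) - cos (a * v)| +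
        |cos (a * u)| * |sin (b * v) - sin (b * u)| :=
        (abs_add_le _ _).trans_eq (by rw [abs_mul, abs_mul])
    _ ≤ |b * u| * |a * u - a * v| + 1 * |b * v - b * u| :=
        add_le_add (mul_le_mul abs_sin_le_abs (abs_cos_sub_cos_le _ _) (abs_nonneg _) (abs_nonneg _))
          (mul_le_mul (abs_cos_le_one _) (abs_sin_sub_sin_le _ _) (abs_nonneg _) zero_le_one)
    _ = _ := by rw [one_mul]

theorem trig_difference_bound_general (n : ℕ) (s θ : ℝ)
    (hs1 : 1 / (2 * (n : ℝ) + 3) ≤ s)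
    (hθ1 : 0 ≤ θ) :
    |Real.cos ((2 * (n : ℝ) + 3) * Real.pi * s) * Real.sin (Real.pi * (s - θ)) -
        Real.sin (Real.pi * s) * Real.cos ((2 * (n : ℝ) + 3) * Real.pi * (s - θ))| ≤
      (6 * (n : ℝ) + 9) * Real.pi ^ 2 * s * θ := by
  set m : ℝ := 2 * n + 3 with hm
  have hm_pos : 0 < m := by positivity
  have hs : 0 < s := lt_of_lt_of_le (by positivity) hs1
  have hms : 1 ≤ m * s := by rwa [div_le_iff₀ hm_pos, mul_comm] at hs1
  have hmπs : 1 ≤ m * π * s := by nlinarith [pi_gt_three]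
  calc _ ≤ |π * s| * |m * π * s - m * π * (s - θ)| + |π * (s - θ) - π * s| :=
        abs_cos_mul_sin_sub_sin_mul_cos_le (m * π) π s (s - θ)
    _ = m * π ^ 2 * s * θ + π * θ := by
        rw [abs_of_nonneg (by positivity), show m * π * s - m * π * (s - θ) = m * π * θ by ring,
          abs_of_nonneg (by positivity), show π * (s - θ) - π * s = -(π * θ) by ring, abs_neg,
          abs_of_nonneg (by positivity)]
        ring
    _ ≤ m * π ^ 2 * s * θ + m * π * s * (π * θ) :=
        add_le_add_right (le_mul_of_one_le_left (by positivity) hmπs) _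
    _ ≤ (6 * (n : ℝ) + 9) * π ^ 2 * s * θ := by
        rw [show (6 * (n : ℝ) + 9) = 3 * m by rw [hm]; ring]
        nlinarith [mul_nonneg (mul_nonneg hm_pos.le (sq_nonneg π)) (mul_nonneg hs.le hθ1)]

/-- Trigonometric inequality:
`|cos((2n+3)πs)·sin(π(s−θ)) − sin(πs)·cos((2n+3)π(s−θ))| ≤ (6n+9)π²sθ`
for `1/(2n+3) ≤ s ≤ 1/2` and `0 ≤ θ ≤ 1/2`. -/
theorem trig_difference_bound (n : ℕ) (s θ : ℝ)
    (hs1 : 1 / (2 * (n : ℝ) + 3) ≤ s) (hs2 : s ≤ 1 / 2)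
    (hθ1 : 0 ≤ θ) (hθ2 : θ ≤ 1 / 2) :
    |Real.cos ((2 * (n : ℝ) + 3) * Real.pi * s) * Real.sin (Real.pi * (s - θ)) -
        Real.sin (Real.pi * s) * Real.cos ((2 * (n : ℝ) + 3) * Real.pi * (s - θ))| ≤
      (6 * (n : ℝ) + 9) * Real.pi ^ 2 * s * θ :=
  trig_difference_bound_general n s θ hs1 hθ1
end

section
/- For every n ∈ ℕ, every θ with 0 ≤ θ ≤ 1/2, and every s with s − θ ≥ 1/(2n+3) and s ≤ 1/2, one has | cos((2n+3)πs)/(2(2n+3)π·sin(πs)) − cos((2n+3)π(s−θ))/(2(2n+3)π·sin(π(s−θ))) | ≤ (3/2)·θ/(s−θ). -/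
/-!
Put the two boundary terms over the common denominator `2(2n+3)π sin(πs) sin(π(s-θ))`.
Writing `cos(ax) sin(by) - cos(ay) sin(bx) = (cos(ax) - cos(ay)) sin(by) + cos(ay) (sin(by) - sin(bx))`,
the Lipschitz bounds for `sin` and `cos` make the numerator `O(θ)`, while Jordan's inequality
`sin(πx) ≥ 2x` on `[0, 1/2]` bounds the denominator below by `8(2n+3)π s (s-θ)`.
The hypothesis `(2n+3)(s-θ) ≥ 1` absorbs the remaining term.
-/

open Real

lemma two_mul_le_sin_pi_mul {x : ℝ} (hx : 0 ≤ x) (hx' : x ≤ 1 / 2) : 2 * x ≤ sin (π * x) := by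
  have h := le_sin_mul (x := 2 * x) (by linarith) (by linarith)
  rwa [show π / 2 * (2 * x) = π * x by ring] at h

lemma four_mul_mul_le_sin_pi_mul_mul_sin_pi_mul {x y : ℝ} (hx : 0 ≤ x) (hx' : x ≤ 1 / 2)
    (hy : 0 ≤ y) (hy' : y ≤ 1 / 2) : 4 * x * y ≤ sin (π * x) * sin (π * y) := by
  have := mul_le_mul (two_mul_le_sin_pi_mul hx hx') (two_mul_le_sin_pi_mul hy hy') (by linarith)
    (by linarith [two_mul_le_sin_pi_mul hx hx'])
  linarith

lemma abs_cos_mul_sin_sub_cos_mul_sin_le (a b x y : ℝ) :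
    |cos (a * x) * sin (b * y) - cos (a * y) * sin (b * x)| ≤
      |a| * |x - y| * (|b| * |y|) + |b| * |x - y| := by
  have hcos : |cos (a * x) - cos (a * y)| ≤ |a| * |x - y| := by
    simpa [← mul_sub, abs_mul] using abs_cos_sub_cos_le (a * x) (a * y)
  have hsin : |sin (b * y) - sin (b * x)| ≤ |b| * |x - y| := by
    simpa [← mul_sub, abs_mul, abs_sub_comm y x] using abs_sin_sub_sin_le (b * y) (b * x)
  have hsin_le : |sin (b * y)| ≤ |b| * |y| := by
    simpa [abs_mul] using abs_sin_le_abs (x := b * y)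
  calc |cos (a * x) * sin (b * y) - cos (a * y) * sin (b * x)|
      = |(cos (a * x) - cos (a * y)) * sin (b * y) + cos (a * y) * (sin (b * y) - sin (b * x))| := by
        ring_nf
    _ ≤ |cos (a * x) - cos (a * y)| * |sin (b * y)| +
          |cos (a * y)| * |sin (b * y) - sin (b * x)| := by
        rw [← abs_mul, ← abs_mul]
        exact abs_add_le _ _
    _ ≤ |a| * |x - y| * (|b| * |y|) + 1 * (|b| * |x - y|) := by
        gcongr
        exact abs_cos_le_one _
    _ = |a| * |x - y| * (|b| * |y|) + |b| * |x - y| := by ring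

theorem boundary_term_bound_general (n : ℕ) (s θ : ℝ)
    (hθ1 : 0 ≤ θ)
    (h1 : 1 / (2 * (n : ℝ) + 3) ≤ s - θ) (h2 : s ≤ 1 / 2) :
    |Real.cos ((2 * (n : ℝ) + 3) * Real.pi * s) /
          (2 * (2 * (n : ℝ) + 3) * Real.pi * Real.sin (Real.pi * s)) -
        Real.cos ((2 * (n : ℝ) + 3) * Real.pi * (s - θ)) /
          (2 * (2 * (n : ℝ) + 3) * Real.pi * Real.sin (Real.pi * (s - θ)))| ≤
      (3 / 2) * θ / (s - θ) := by
  set N : ℝ := 2 * (n : ℝ) + 3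
  have hN : 0 < N := by positivity
  have hsθ : 0 < s - θ := lt_of_lt_of_le (by positivity) h1
  have hs : 0 < s := by linarith
  have hN_sθ : 1 ≤ N * (s - θ) := by rwa [div_le_iff₀ hN, mul_comm] at h1
  have hS : 0 < sin (π * s) := by linarith [two_mul_le_sin_pi_mul hs.le h2]
  have hT : 0 < sin (π * (s - θ)) := by linarith [two_mul_le_sin_pi_mul hsθ.le (by linarith)]
  have hnum := abs_cos_mul_sin_sub_cos_mul_sin_le (N * π) π s (s - θ)
  rw [sub_sub_cancel, abs_of_pos (by positivity : 0 < N * π), abs_of_pos pi_pos,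
    abs_of_nonneg hθ1, abs_of_pos hsθ] at hnum
  have hden := mul_le_mul_of_nonneg_left
    (four_mul_mul_le_sin_pi_mul_mul_sin_pi_mul hs.le h2 hsθ.le (by linarith))
    (by positivity : 0 ≤ 2 * N * π)
  have hcommon : cos (N * π * s) / (2 * N * π * sin (π * s)) -
        cos (N * π * (s - θ)) / (2 * N * π * sin (π * (s - θ))) =
      (cos (N * π * s) * sin (π * (s - θ)) - cos (N * π * (s - θ)) * sin (π * s)) /
        (2 * N * π * (sin (π * s) * sin (π * (s - θ)))) := by
    field_simp
  rw [hcommon, abs_div, abs_of_pos (by positivity : 0 < 2 * N * π * (sin (π * s) * sin (π * (s - θ))))]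
  calc _ ≤ (N * π * θ * (π * (s - θ)) + π * θ) / (2 * N * π * (4 * s * (s - θ))) :=
        div_le_div₀ (by positivity) hnum (by positivity) hden
    _ ≤ 3 / 2 * θ / (s - θ) := by
        rw [div_le_div_iff₀ (by positivity) hsθ]
        have key : N * π * (s - θ) + 1 ≤ 12 * N * s := by
          nlinarith [pi_le_four, mul_le_mul_of_nonneg_left pi_le_four hN.le]
        nlinarith [mul_le_mul_of_nonneg_left key (by positivity : 0 ≤ π * θ * (s - θ))]

/-- Bound on the boundary terms of the integration by parts:
`|cos((2n+3)πs)/(2(2n+3)π sin(πs)) − cos((2n+3)π(s−θ))/(2(2n+3)π sin(π(s−θ)))| ≤ (3/2)θ/(s−θ)`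
for `0 ≤ θ ≤ 1/2`, `s − θ ≥ 1/(2n+3)` and `s ≤ 1/2`. -/
theorem boundary_term_bound (n : ℕ) (s θ : ℝ)
    (hθ1 : 0 ≤ θ) (hθ2 : θ ≤ 1 / 2)
    (h1 : 1 / (2 * (n : ℝ) + 3) ≤ s - θ) (h2 : s ≤ 1 / 2) :
    |Real.cos ((2 * (n : ℝ) + 3) * Real.pi * s) /
          (2 * (2 * (n : ℝ) + 3) * Real.pi * Real.sin (Real.pi * s)) -
        Real.cos ((2 * (n : ℝ) + 3) * Real.pi * (s - θ)) /
          (2 * (2 * (n : ℝ) + 3) * Real.pi * Real.sin (Real.pi * (s - θ)))| ≤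
      (3 / 2) * θ / (s - θ) :=
  boundary_term_bound_general n s θ hθ1 h1 h2
end
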